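/- arXiv:1903.01859 — 6 statements merged into one kernel-verified Lean document; each statement's English description precedes it below -/
import Mathlib

section
/- Let A be an n×n positive semidefinite real matrix and B an n×n real symmetric matrix, and let α ∈ (0,1). Then Tr(A^α B A^{1-α} B) ≤ Tr(A B²). -/
open Matrix

lemma trace_diag_mul_diag_mul {n : ℕ} (e f : Fin n → ℝ) (C : Matrix (Fin n) (Fin n) ℝ) :
    (Matrix.diagonal e * C * Matrix.diagonal f * C).trace
      = ∑ i, ∑ j, e i * C i j * f j * C j i := by
  simp [Matrix.trace, Matrix.diag, Matrix.mul_apply, Matrix.diagonal_apply, Finset.mul_sum,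
    Finset.sum_mul, ite_mul, mul_ite, mul_assoc]

/-- For a positive semidefinite matrix `A = U diag(d) Uᵀ` (with `U` orthogonal and `d ≥ 0`),
a symmetric matrix `B`, and `α ∈ (0,1)`, we have `Tr(A^α B A^{1-α} B) ≤ Tr(A B²)`,
where `A^β = U diag(d^β) Uᵀ` is the matrix power defined via the spectral decomposition. -/
theorem stmt_0 {n : ℕ} (A B U : Matrix (Fin n) (Fin n) ℝ) (d : Fin n → ℝ)
    (hU : U * Uᵀ = 1) (hU' : Uᵀ * U = 1)
    (hd : ∀ i, 0 ≤ d i)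
    (hA : A = U * Matrix.diagonal d * Uᵀ)
    (hB : B.IsSymm)
    (α : ℝ) (hα : α ∈ Set.Ioo (0 : ℝ) 1) :
    ((U * Matrix.diagonal (fun i => d i ^ α) * Uᵀ) * B *
      (U * Matrix.diagonal (fun i => d i ^ (1 - α)) * Uᵀ) * B).trace ≤
      (A * B * B).trace := by
  set C : Matrix (Fin n) (Fin n) ℝ := Uᵀ * B * U with hC
  have hCs : ∀ i j, C j i = C i j := by
    intro i j
    have : Cᵀ = C := by
      rw [hC]
      simp [Matrix.transpose_mul, hB.eq, Matrix.mul_assoc]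
    calc C j i = Cᵀ i j := rfl
    _ = C i j := by rw [this]
  have conj : ∀ e f : Fin n → ℝ,
      (U * Matrix.diagonal e * Uᵀ) * B * (U * Matrix.diagonal f * Uᵀ) * B
        = U * (Matrix.diagonal e * C * Matrix.diagonal f * C * Uᵀ) := by
    intro e f
    rw [hC]
    simp only [Matrix.mul_assoc]
    rw [hU, Matrix.mul_one]
  have htr : ∀ e f : Fin n → ℝ,
      ((U * Matrix.diagonal e * Uᵀ) * B * (U * Matrix.diagonal f * Uᵀ) * B).trace
        = ∑ i, ∑ j, e i * C i j * f j * C j i := by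
    intro e f
    rw [conj, Matrix.trace_mul_comm, Matrix.mul_assoc, hU', Matrix.mul_one,
      trace_diag_mul_diag_mul]
  have hRHS : (A * B * B).trace = ∑ i, ∑ j, d i * C i j * C j i := by
    have : A * B * B = (U * Matrix.diagonal d * Uᵀ) * B * (U * Matrix.diagonal (fun _ => 1) * Uᵀ) * B := by
      rw [hA]
      simp [Matrix.diagonal_one, hU, Matrix.mul_assoc]
    rw [this, htr]
    simp
  rw [htr, hRHS]
  have key : ∀ i j : Fin n, d i ^ α * C i j * d j ^ (1 - α) * C j i
      ≤ (α * d i + (1 - α) * d j) * (C i j * C j i) := by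
    intro i j
    have hg : d i ^ α * d j ^ (1 - α) ≤ α * d i + (1 - α) * d j :=
      Real.geom_mean_le_arith_mean2_weighted hα.1.le (by linarith [hα.2]) (hd i) (hd j)
        (by ring)
    have hsq : 0 ≤ C i j * C j i := by rw [hCs i j]; exact mul_self_nonneg _
    calc d i ^ α * C i j * d j ^ (1 - α) * C j i
        = (d i ^ α * d j ^ (1 - α)) * (C i j * C j i) := by ring
    _ ≤ (α * d i + (1 - α) * d j) * (C i j * C j i) := by
        exact mul_le_mul_of_nonneg_right hg hsq
  calc ∑ i, ∑ j, d i ^ α * C i j * d j ^ (1 - α) * C j i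
      ≤ ∑ i, ∑ j, (α * d i + (1 - α) * d j) * (C i j * C j i) := by
        apply Finset.sum_le_sum; intro i _; apply Finset.sum_le_sum; intro j _
        exact key i j
  _ = α * (∑ i, ∑ j, d i * (C i j * C j i))
        + (1 - α) * (∑ i, ∑ j, d j * (C i j * C j i)) := by
      simp [Finset.mul_sum, Finset.sum_add_distrib, add_mul, mul_assoc]
  _ = ∑ i, ∑ j, d i * C i j * C j i := by
      have hsw : (∑ i, ∑ j, d j * (C i j * C j i)) = ∑ i, ∑ j, d i * (C i j * C j i) := by
        rw [Finset.sum_comm]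
        refine Finset.sum_congr rfl fun i _ => Finset.sum_congr rfl fun j _ => ?_
        rw [hCs i j]
      rw [hsw]
      have h2 : (∑ i, ∑ j, d i * C i j * C j i) = ∑ i, ∑ j, d i * (C i j * C j i) := by
        simp [mul_assoc]
      rw [h2]; ring
end

section
/- Let x be a chi-squared random variable with N ≥ 2 degrees of freedom. Then for any a > 0, P(x ≤ a) ≤ 2 a^{N/2 − 1} e^{N/2} / N^{(N−1)/2}. -/
/-!
For `x ≤ a` the factor `x ^ (N/2 - 1)` of the `χ²_N` density is at most `a ^ (N/2 - 1)`,
so on `Iic a` the density is dominated by a multiple of the exponential density of rate `1/2`,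
giving `P(x ≤ a) ≤ (a/2) ^ (N/2 - 1) / Γ(N/2)`. The Stirling-type bound
`Γ(N/2) ≥ (N/(2e)) ^ ((N-1)/2)` follows from Legendre's duplication formula at `s = N/2`,
the log-convexity estimate `Γ(s + 1/2) ≤ √s Γ(s)` and Stirling's lower bound for `N!`,
with `2π / e ≥ 1` to spare.
-/

open MeasureTheory ProbabilityTheory Real Set

namespace Real

theorem Gamma_add_half_le_sqrt_mul_Gamma {s : ℝ} (hs : 0 < s) :
    Gamma (s + 1 / 2) ≤ √s * Gamma s := by
  have hΓ := (Gamma_pos_of_pos hs).le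
  have h := Gamma_mul_add_mul_le_rpow_Gamma_mul_rpow_Gamma hs (add_pos hs one_pos)
    one_half_pos one_half_pos (add_halves 1)
  rwa [Gamma_add_one hs.ne', mul_rpow hs.le hΓ, ← mul_assoc, ← mul_rpow hΓ hs.le,
    mul_comm (Gamma s), mul_rpow hs.le hΓ, mul_assoc, ← mul_rpow hΓ hΓ, ← sqrt_eq_rpow,
    ← sqrt_eq_rpow, sqrt_mul_self hΓ, show 1 / 2 * s + 1 / 2 * (s + 1) = s + 1 / 2 by ring] at h

theorem Gamma_two_mul_mul_two_rpow_mul_sqrt_pi_le {s : ℝ} (hs : 0 < s) :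
    Gamma (2 * s) * 2 ^ (1 - 2 * s) * √π ≤ √s * Gamma s ^ 2 := by
  rw [← Gamma_mul_Gamma_add_half_of_pos hs]
  calc Gamma s * Gamma (s + 1 / 2) ≤ Gamma s * (√s * Gamma s) :=
        mul_le_mul_of_nonneg_left (Gamma_add_half_le_sqrt_mul_Gamma hs) (Gamma_pos_of_pos hs).le
    _ = √s * Gamma s ^ 2 := by ring

theorem div_two_mul_exp_pow_mul_four_pi_le {N : ℕ} (hN : N ≠ 0) :
    ((N : ℝ) / (2 * exp 1)) ^ N * (4 * π) ≤ N * Gamma (N / 2) ^ 2 := by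
  have hN0 : (0 : ℝ) < N := by positivity
  have hdup := Gamma_two_mul_mul_two_rpow_mul_sqrt_pi_le (half_pos hN0)
  rw [mul_div_cancel₀ _ two_ne_zero, rpow_sub zero_lt_two, rpow_one, rpow_natCast] at hdup
  have hstir : √(2 * π * N) * (N / exp 1) ^ N ≤ N * Gamma N := by
    rw [← Gamma_add_one hN0.ne', Gamma_nat_eq_factorial]
    exact Stirling.le_factorial_stirling N
  have hsqrt : √(N / 2) * √(2 * π * N) = N * √π := by
    rw [← sqrt_mul (by positivity), show (N / 2 : ℝ) * (2 * π * N) = (N * √π) ^ 2 by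
      rw [mul_pow, sq_sqrt pi_pos.le]; ring]
    exact sqrt_sq (by positivity)
  refine le_of_mul_le_mul_left ?_ hN0
  calc N * (((N : ℝ) / (2 * exp 1)) ^ N * (4 * π))
      = 2 * (2 / 2 ^ N * √π * (√(N / 2) * √(2 * π * N)) * (N / exp 1) ^ N) := by
        rw [hsqrt, div_pow, div_pow, mul_pow]
        linear_combination (-4 * N * N ^ N / (2 ^ N * exp 1 ^ N)) * sq_sqrt pi_pos.le
    _ ≤ 2 * (2 / 2 ^ N * √π * √(N / 2) * (N * Gamma N)) := by
        rw [← mul_assoc _ (√(N / 2)), mul_assoc _ (√(2 * π * N))]; gcongr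
    _ = 2 * N * √(N / 2) * (Gamma N * (2 / 2 ^ N) * √π) := by ring
    _ ≤ 2 * N * √(N / 2) * (√(N / 2) * Gamma (N / 2) ^ 2) := by gcongr
    _ = N * (N * Gamma (N / 2) ^ 2) := by
        linear_combination (2 * N * Gamma (N / 2) ^ 2) * mul_self_sqrt (half_pos hN0).le

theorem div_two_mul_exp_rpow_le_Gamma_half {N : ℕ} (hN : N ≠ 0) :
    ((N : ℝ) / (2 * exp 1)) ^ (((N : ℝ) - 1) / 2) ≤ Gamma (N / 2) := by
  have hx : 0 < (N : ℝ) / (2 * exp 1) := by positivity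
  have hΓ : 0 < Gamma (N / 2) := Gamma_pos_of_pos (by positivity)
  rw [← pow_le_pow_iff_left₀ (rpow_nonneg hx.le _) hΓ.le two_ne_zero, ← rpow_natCast,
    ← rpow_mul hx.le, show ((N : ℝ) - 1) / 2 * (2 : ℕ) = N - 1 by push_cast; ring,
    rpow_sub_one hx.ne', rpow_natCast, div_le_iff₀ hx]
  calc ((N : ℝ) / (2 * exp 1)) ^ N
      = ((N : ℝ) / (2 * exp 1)) ^ N * (2 * exp 1) / (2 * exp 1) := by field_simp
    _ ≤ ((N : ℝ) / (2 * exp 1)) ^ N * (4 * π) / (2 * exp 1) := by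
        gcongr _ * ?_ / _
        linarith [exp_one_lt_d9, pi_gt_three]
    _ ≤ N * Gamma (N / 2) ^ 2 / (2 * exp 1) := by
        gcongr ?_ / _
        exact div_two_mul_exp_pow_mul_four_pi_le hN
    _ = Gamma (N / 2) ^ 2 * ((N : ℝ) / (2 * exp 1)) := by ring

theorem half_rpow_div_Gamma_half_le {N : ℕ} (hN : N ≠ 0) :
    (1 / 2 : ℝ) ^ ((N : ℝ) / 2 - 1) / Gamma (N / 2) ≤
      2 * exp (N / 2) / (N : ℝ) ^ (((N : ℝ) - 1) / 2) := by
  have hΓ : 0 < Gamma (N / 2) := Gamma_pos_of_pos (by positivity)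
  have h2e : 0 < 2 * exp 1 := by positivity
  have hpow :
      (N : ℝ) ^ (((N : ℝ) - 1) / 2) ≤ 2 ^ ((N : ℝ) / 2) * exp (N / 2) * Gamma (N / 2) :=
    calc (N : ℝ) ^ (((N : ℝ) - 1) / 2)
        = (2 * exp 1) ^ (((N : ℝ) - 1) / 2) *
            ((N : ℝ) / (2 * exp 1)) ^ (((N : ℝ) - 1) / 2) := by
          rw [← mul_rpow h2e.le (by positivity), mul_div_cancel₀ _ h2e.ne']
      _ ≤ (2 * exp 1) ^ ((N : ℝ) / 2) * Gamma (N / 2) := by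
          gcongr
          · linarith [add_one_lt_exp one_ne_zero]
          · linarith
          · exact div_two_mul_exp_rpow_le_Gamma_half hN
      _ = 2 ^ ((N : ℝ) / 2) * exp (N / 2) * Gamma (N / 2) := by
          rw [mul_rpow zero_le_two (exp_pos 1).le, ← exp_mul, one_mul]
  rw [div_le_div_iff₀ hΓ (by positivity), one_div, inv_rpow zero_le_two,
    rpow_sub_one two_ne_zero, inv_div]
  calc 2 / 2 ^ ((N : ℝ) / 2) * (N : ℝ) ^ (((N : ℝ) - 1) / 2)
      ≤ 2 / 2 ^ ((N : ℝ) / 2) * (2 ^ ((N : ℝ) / 2) * exp (N / 2) * Gamma (N / 2)) := by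
        gcongr
    _ = 2 * exp (N / 2) * Gamma (N / 2) := by field_simp

end Real

theorem gammaPDF_le_mul_exponentialPDF {α r a x : ℝ} (hα : 1 ≤ α) (hr : 0 < r) (hxa : x ≤ a) :
    gammaPDF α r x ≤
      ENNReal.ofReal (r ^ (α - 1) * a ^ (α - 1) / Gamma α) * exponentialPDF r x := by
  rcases lt_or_ge x 0 with hx | hx
  · simp [gammaPDF_of_neg hx]
  have hΓ : 0 < Gamma α := Gamma_pos_of_pos (by linarith)
  rw [gammaPDF_of_nonneg hx, exponentialPDF_of_nonneg hx, ← ENNReal.ofReal_mul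
    (div_nonneg (mul_nonneg (by positivity) (rpow_nonneg (hx.trans hxa) _)) hΓ.le)]
  refine ENNReal.ofReal_le_ofReal ?_
  calc r ^ α / Gamma α * x ^ (α - 1) * exp (-(r * x))
      = r ^ (α - 1) * x ^ (α - 1) / Gamma α * (r * exp (-(r * x))) := by
        rw [rpow_sub_one hr.ne']; field_simp
    _ ≤ r ^ (α - 1) * a ^ (α - 1) / Gamma α * (r * exp (-(r * x))) := by gcongr

theorem gammaMeasure_Iic_le {α r : ℝ} (hα : 1 ≤ α) (hr : 0 < r) (a : ℝ) :
    gammaMeasure α r (Iic a) ≤ ENNReal.ofReal (r ^ (α - 1) * a ^ (α - 1) / Gamma α) := by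
  set C := ENNReal.ofReal (r ^ (α - 1) * a ^ (α - 1) / Gamma α)
  calc gammaMeasure α r (Iic a) = ∫⁻ x in Iic a, gammaPDF α r x :=
        withDensity_apply _ measurableSet_Iic
    _ ≤ ∫⁻ x in Iic a, C * exponentialPDF r x :=
        setLIntegral_mono' measurableSet_Iic fun x hx ↦ gammaPDF_le_mul_exponentialPDF hα hr hx
    _ ≤ ∫⁻ x, C * exponentialPDF r x := setLIntegral_le_lintegral _ _
    _ = C := by
        rw [lintegral_const_mul' _ _ ENNReal.ofReal_ne_top, lintegral_exponentialPDF_eq_one hr,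
          mul_one]

/-- Tail (CDF) bound for the chi-squared distribution with `N ≥ 2` degrees of freedom,
realized as the Gamma distribution with shape `N/2` and rate `1/2`:
`P(x ≤ a) ≤ 2 a^{N/2−1} e^{N/2} / N^{(N−1)/2}` for all `a > 0`. -/
theorem stmt_7 (N : ℕ) (hN : 2 ≤ N) (a : ℝ) (ha : 0 < a) :
    (gammaMeasure ((N : ℝ) / 2) (1 / 2)) (Set.Iic a) ≤
      ENNReal.ofReal
        (2 * a ^ ((N : ℝ) / 2 - 1) * Real.exp ((N : ℝ) / 2) /
          (N : ℝ) ^ (((N : ℝ) - 1) / 2)) := by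
  have hα : 1 ≤ (N : ℝ) / 2 := by
    rw [le_div_iff₀ two_pos, one_mul]; exact_mod_cast hN
  refine (gammaMeasure_Iic_le hα one_half_pos a).trans (ENNReal.ofReal_le_ofReal ?_)
  calc (1 / 2 : ℝ) ^ ((N : ℝ) / 2 - 1) * a ^ ((N : ℝ) / 2 - 1) / Gamma (N / 2)
      = (1 / 2 : ℝ) ^ ((N : ℝ) / 2 - 1) / Gamma (N / 2) * a ^ ((N : ℝ) / 2 - 1) := by ring
    _ ≤ 2 * exp (N / 2) / (N : ℝ) ^ (((N : ℝ) - 1) / 2) * a ^ ((N : ℝ) / 2 - 1) :=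
        mul_le_mul_of_nonneg_right (half_rpow_div_Gamma_half_le (by omega)) (rpow_nonneg ha.le _)
    _ = 2 * a ^ ((N : ℝ) / 2 - 1) * exp (N / 2) / (N : ℝ) ^ (((N : ℝ) - 1) / 2) := by ring
end

section
/- Let C be a real symmetric n×n matrix, ρ ∈ ℝⁿ with ρ_i = Σ_j |C_ij| > 0, X an n×n positive semidefinite matrix, S the diagonal matrix with S_ii = min(1/√ρ_i, 1/√X_ii), X̂ = S X S, and Ĉ = D C D where D = diag(1/√ρ). Then Ĉ • X − Σ_{i=1}^n (X_ii − ρ_i)⁺ ≤ C • X̂, where A • B = Tr(AᵀB) and t⁺ = max(t, 0). -/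
/-!
Write `d = 1/√ρ`, `s = diag S` and `a i = √(X i i) * d i`, so that `√(X i i) * s i = min (a i) 1`.
Since `s ≤ d` and `|X i j| ≤ √(X i i) √(X j j)` (the `2 × 2` minors of `X`), the `(i, j)` term of
`Ĉ • X - C • X̂` is at most `|C i j| (a i a j - min (a i) 1 min (a j) 1)`, which is at most
`|C i j|` times the average of the overshoots `(a i ^ 2 - 1)⁺` and `(a j ^ 2 - 1)⁺`.
Summing, the symmetry of `C` turns the weights `|C i j|` into the row sums `ρ i`,
and `ρ i (X i i / ρ i - 1)⁺ = (X i i - ρ i)⁺`.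
-/

open Matrix

/-- The Frobenius (trace) inner product of two square real matrices. -/
noncomputable def matDot {n : ℕ} (A B : Matrix (Fin n) (Fin n) ℝ) : ℝ :=
  (Aᵀ * B).trace

lemma matDot_eq_sum {n : ℕ} (A B : Matrix (Fin n) (Fin n) ℝ) :
    matDot A B = ∑ i, ∑ j, A i j * B i j := by
  simp only [matDot, trace, diag, mul_apply, transpose_apply]
  exact Finset.sum_comm

lemma Matrix.PosSemidef.sq_apply_le {ι : Type*} [Fintype ι] {X : Matrix ι ι ℝ}
    (hX : X.PosSemidef) (i j : ι) : X i j ^ 2 ≤ X i i * X j j := by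
  have hdet := (hX.submatrix ![i, j]).det_nonneg
  have hsymm : X j i = X i j := hX.isHermitian.apply i j
  rw [det_fin_two] at hdet
  simp only [submatrix_apply, Fin.isValue, cons_val_zero, cons_val_one, hsymm] at hdet
  nlinarith

lemma Matrix.PosSemidef.abs_apply_le {ι : Type*} [Fintype ι] {X : Matrix ι ι ℝ}
    (hX : X.PosSemidef) (i j : ι) : |X i j| ≤ √(X i i) * √(X j j) := by
  rw [← Real.sqrt_mul hX.diag_nonneg, ← Real.sqrt_sq_eq_abs]
  exact Real.sqrt_le_sqrt (hX.sq_apply_le i j)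

lemma mul_sub_min_one_mul_min_one_le (a c : ℝ) :
    a * c - min a 1 * min c 1 ≤ (max (a ^ 2 - 1) 0 + max (c ^ 2 - 1) 0) / 2 := by
  have := le_max_left (a ^ 2 - 1) 0
  have := le_max_right (a ^ 2 - 1) 0
  have := le_max_left (c ^ 2 - 1) 0
  have := le_max_right (c ^ 2 - 1) 0
  rcases le_total a 1 with ha | ha <;> rcases le_total c 1 with hc | hc <;>
    simp only [min_eq_left, min_eq_right, ha, hc] <;> nlinarith [sq_nonneg (a - c)]

lemma sum_sum_mul_add_div_two {ι : Type*} [Fintype ι] (w : ι → ι → ℝ)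
    (hw : ∀ i j, w i j = w j i) (t : ι → ℝ) :
    ∑ i, ∑ j, w i j * ((t i + t j) / 2) = ∑ i, (∑ j, w i j) * t i := by
  have hswap : ∑ i, ∑ j, w i j * t j = ∑ i, ∑ j, w i j * t i := by
    rw [Finset.sum_comm]; simp only [hw]
  simp only [Finset.sum_mul]
  linarith [show ∑ i, ∑ j, w i j * ((t i + t j) / 2)
      = (∑ i, ∑ j, w i j * t i + ∑ i, ∑ j, w i j * t j) / 2 by
    simp only [mul_add, add_div, Finset.sum_add_distrib, Finset.sum_div, mul_div_assoc]]

lemma sqrt_mul_ite_min (x d : ℝ) :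
    √x * (if x = 0 then d else min d (1 / √x)) = min (√x * d) 1 := by
  rcases (Real.sqrt_nonneg x).eq_or_lt with h | h
  · simp [← h]
  · rw [if_neg (by rintro rfl; simp at h), mul_min_of_nonneg _ _ h.le, mul_one_div_cancel h.ne']

lemma mul_max_mul_one_div_sqrt_sq_sub_one {r : ℝ} (hr : 0 < r) (x : ℝ) :
    r * max (x * (1 / √r) ^ 2 - 1) 0 = max (x - r) 0 := by
  rw [div_pow, one_pow, Real.sq_sqrt hr.le, mul_max_of_nonneg _ _ hr.le, mul_zero]
  congr 1
  field_simp

theorem matDot_diagonal_sub_matDot_le {n : ℕ} (C X : Matrix (Fin n) (Fin n) ℝ) (hC : C.IsSymm)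
    (hX : X.PosSemidef) (d s : Fin n → ℝ) (hs : ∀ i, 0 ≤ s i) (hsd : ∀ i, s i ≤ d i)
    (hsX : ∀ i, √(X i i) * s i = min (√(X i i) * d i) 1) :
    matDot (diagonal d * C * diagonal d) X - matDot C (diagonal s * X * diagonal s)
      ≤ ∑ i, (∑ j, |C i j|) * max (X i i * d i ^ 2 - 1) 0 := by
  set a : Fin n → ℝ := fun i => √(X i i) * d i
  have ht : ∀ i, max (X i i * d i ^ 2 - 1) 0 = max (a i ^ 2 - 1) 0 := fun i => by
    rw [mul_pow, Real.sq_sqrt hX.diag_nonneg]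
  have hpair : ∀ i j, d i * C i j * d j * X i j - C i j * (s i * X i j * s j)
      ≤ |C i j| * ((max (a i ^ 2 - 1) 0 + max (a j ^ 2 - 1) 0) / 2) := fun i j => by
    have hgap : 0 ≤ d i * d j - s i * s j :=
      sub_nonneg.2 (mul_le_mul (hsd i) (hsd j) (hs j) ((hs i).trans (hsd i)))
    have hCX : C i j * X i j ≤ |C i j| * (√(X i i) * √(X j j)) :=
      (le_abs_self _).trans ((abs_mul _ _).trans_le
        (mul_le_mul_of_nonneg_left (hX.abs_apply_le i j) (abs_nonneg _)))
    calc d i * C i j * d j * X i j - C i j * (s i * X i j * s j)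
        = C i j * X i j * (d i * d j - s i * s j) := by ring
      _ ≤ |C i j| * (√(X i i) * √(X j j)) * (d i * d j - s i * s j) :=
        mul_le_mul_of_nonneg_right hCX hgap
      _ = |C i j| * (a i * a j - min (a i) 1 * min (a j) 1) := by
        simp only [a, ← hsX]; ring
      _ ≤ _ := mul_le_mul_of_nonneg_left (mul_sub_min_one_mul_min_one_le _ _) (abs_nonneg _)
  have habs : ∀ i j, |C i j| = |C j i| := fun i j => by rw [hC.apply i j]
  simp only [ht]
  rw [← sum_sum_mul_add_div_two _ habs, matDot_eq_sum, matDot_eq_sum, ← Finset.sum_sub_distrib]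
  gcongr with i _
  rw [← Finset.sum_sub_distrib]
  gcongr with j _
  simpa only [mul_diagonal, diagonal_mul] using hpair i j

/-- With `ρ_i = Σ_j |C_ij| > 0`, `X` PSD, `S = diag(min(1/√ρ_i, 1/√X_ii))`,
`X̂ = S X S` and `Ĉ = diag(1/√ρ) C diag(1/√ρ)`, we have
`Ĉ • X − Σᵢ (X_ii − ρ_i)⁺ ≤ C • X̂`. -/
theorem stmt_9 {n : ℕ} (C X : Matrix (Fin n) (Fin n) ℝ)
    (hC : C.IsSymm)
    (ρ : Fin n → ℝ) (hρ : ∀ i, ρ i = ∑ j, |C i j|) (hρpos : ∀ i, 0 < ρ i)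
    (hX : X.PosSemidef)
    (S : Matrix (Fin n) (Fin n) ℝ)
    (hS : S = Matrix.diagonal fun i =>
      if X i i = 0 then 1 / Real.sqrt (ρ i)
      else min (1 / Real.sqrt (ρ i)) (1 / Real.sqrt (X i i)))
    (Chat : Matrix (Fin n) (Fin n) ℝ)
    (hChat : Chat = Matrix.diagonal (fun i => 1 / Real.sqrt (ρ i)) * C *
      Matrix.diagonal (fun i => 1 / Real.sqrt (ρ i))) :
    matDot Chat X - ∑ i, max (X i i - ρ i) 0 ≤ matDot C (S * X * S) := by
  subst hS hChat
  have hscale := matDot_diagonal_sub_matDot_le C X hC hX (fun i => 1 / √(ρ i)) _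
    (fun i => by split_ifs <;> positivity) (fun i => by split_ifs <;> simp)
    (fun i => sqrt_mul_ite_min (X i i) _)
  have hpenalty : ∀ i, (∑ j, |C i j|) * max (X i i * (1 / √(ρ i)) ^ 2 - 1) 0
      = max (X i i - ρ i) 0 := fun i => by
    rw [← hρ i, mul_max_mul_one_div_sqrt_sq_sub_one (hρpos i)]
  simp only [hpenalty] at hscale
  linarith
end

section
/- Let ρ ∈ ℝⁿ with ρ_i = Σ_j |C_ij| > 0 for a symmetric matrix C, and Ĉ = diag(1/√ρ) C diag(1/√ρ). Define f(X) = −Ĉ • X + Σ_{i=1}^n (X_ii − ρ_i)⁺ on symmetric matrices X. Then f is 2-Lipschitz with respect to the nuclear norm, i.e., |f(X) − f(Y)| ≤ 2‖X − Y‖_nuc for all symmetric X, Y. -/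
open Matrix

/-- The nuclear norm of a real square matrix: the sum of its singular values. -/
noncomputable def nuclearNorm {n : ℕ} (A : Matrix (Fin n) (Fin n) ℝ) : ℝ :=
  ∑ i, Real.sqrt ((show (Aᵀ * A).IsHermitian by
    simpa using Matrix.isHermitian_conjTranspose_mul_self A).eigenvalues i)

/-!
Write `Z = X - Y = ∑ₖ μₖ vₖ vₖᵀ` with orthonormal eigenvectors `vₖ`. Then `‖Z‖_nuc = ∑ₖ |μₖ|`
and `A • Z = ∑ₖ μₖ vₖᵀ A vₖ`, so `|A • Z| ≤ ‖Z‖_nuc` as soon as `|xᵀ A x| ≤ ‖x‖²` for all `x`.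
For `A = Ĉ` this is a Schur test: AM-GM and the symmetry of `C` bound `|yᵀ C y|` by
`∑ᵢ ρᵢ yᵢ²`, and `y = diag(1/√ρ) x` turns this into `‖x‖²`. For a diagonal sign matrix it gives
`∑ᵢ |Zᵢᵢ| ≤ ‖Z‖_nuc`, which bounds the change of the penalty term since `t ↦ t⁺` is 1-Lipschitz.
-/

open Polynomial in
theorem Matrix.IsHermitian.sum_comp_eigenvalues_of_charpoly_eq {ι : Type*} [Fintype ι]
    [DecidableEq ι] {A : Matrix ι ι ℝ} (hA : A.IsHermitian) {d : ι → ℝ}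
    (h : A.charpoly = ∏ i, (X - C (d i))) (φ : ℝ → ℝ) :
    ∑ i, φ (hA.eigenvalues i) = ∑ i, φ (d i) := by
  have hroots : Finset.univ.val.map hA.eigenvalues = Finset.univ.val.map d := by
    have := hA.roots_charpoly_eq_eigenvalues
    rw [h, roots_prod _ _ (Finset.prod_ne_zero_iff.mpr fun i _ => X_sub_C_ne_zero _)] at this
    simp only [roots_X_sub_C, Multiset.bind_singleton] at this
    exact this.symm
  have := congrArg (fun s => (s.map φ).sum) hroots
  simp only [Multiset.map_map] at this
  exact this

section

variable {n : ℕ}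

theorem nuclearNorm_eq_sum_abs_eigenvalues {Z : Matrix (Fin n) (Fin n) ℝ} (hZ : Z.IsHermitian) :
    nuclearNorm Z = ∑ k, |hZ.eigenvalues k| := by
  have hsq : Zᵀ * Z = cfc (· ^ 2 : ℝ → ℝ) Z := by
    rw [cfc_pow_id Z 2 hZ.isSelfAdjoint, sq, (isHermitian_iff_isSymm.mp hZ).eq]
  simp_rw [← Real.sqrt_sq_eq_abs]
  exact IsHermitian.sum_comp_eigenvalues_of_charpoly_eq _
    (by rw [hsq, hZ.charpoly_cfc_eq]; rfl) Real.sqrt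

theorem matDot_sub_right (A X Y : Matrix (Fin n) (Fin n) ℝ) :
    matDot A (X - Y) = matDot A X - matDot A Y := by
  rw [matDot, matDot, matDot, Matrix.mul_sub, trace_sub]

theorem matDot_diagonal (s : Fin n → ℝ) (Z : Matrix (Fin n) (Fin n) ℝ) :
    matDot (diagonal s) Z = ∑ i, s i * Z i i := by
  simp [matDot, trace, diagonal_mul]

theorem matDot_eq_sum_eigenvalues_mul (A : Matrix (Fin n) (Fin n) ℝ)
    {Z : Matrix (Fin n) (Fin n) ℝ} (hZ : Z.IsHermitian) :
    matDot A Z = ∑ k, hZ.eigenvalues k *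
      (⇑(hZ.eigenvectorBasis k) ⬝ᵥ A *ᵥ ⇑(hZ.eigenvectorBasis k)) := by
  set U : Matrix (Fin n) (Fin n) ℝ := (hZ.eigenvectorUnitary : Matrix (Fin n) (Fin n) ℝ)
  have hZU : Z = U * diagonal hZ.eigenvalues * Uᵀ := by
    conv_lhs => rw [hZ.spectral_theorem]
    simp [Unitary.conjStarAlgAut_apply, U, star_eq_conjTranspose]
  calc matDot A Z = (Z * A).trace := by
        rw [matDot, ← trace_transpose, transpose_mul, transpose_transpose,
          (isHermitian_iff_isSymm.mp hZ).eq]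
    _ = (diagonal hZ.eigenvalues * (Uᵀ * A * U)).trace := by
        conv_lhs => rw [hZU]
        rw [Matrix.mul_assoc, Matrix.mul_assoc, trace_mul_comm, Matrix.mul_assoc,
          Matrix.mul_assoc]
    _ = _ := by simp [trace, diagonal_mul, mul_mul_apply, U]

theorem dotProduct_self_eigenvectorBasis {Z : Matrix (Fin n) (Fin n) ℝ} (hZ : Z.IsHermitian)
    (k : Fin n) : ⇑(hZ.eigenvectorBasis k) ⬝ᵥ ⇑(hZ.eigenvectorBasis k) = 1 := by
  have := real_inner_self_eq_norm_sq (hZ.eigenvectorBasis k)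
  rw [hZ.eigenvectorBasis.orthonormal.1 k, EuclideanSpace.inner_eq_star_dotProduct] at this
  simpa using this

theorem abs_matDot_le_nuclearNorm {A Z : Matrix (Fin n) (Fin n) ℝ} (hZ : Z.IsSymm)
    (hA : ∀ x, |x ⬝ᵥ A *ᵥ x| ≤ x ⬝ᵥ x) : |matDot A Z| ≤ nuclearNorm Z := by
  have hZh : Z.IsHermitian := isHermitian_iff_isSymm.mpr hZ
  rw [matDot_eq_sum_eigenvalues_mul A hZh, nuclearNorm_eq_sum_abs_eigenvalues hZh]
  refine (Finset.abs_sum_le_sum_abs _ _).trans (Finset.sum_le_sum fun k _ => ?_)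
  rw [abs_mul]
  grw [hA, dotProduct_self_eigenvectorBasis, mul_one]

theorem abs_dotProduct_diagonal_mulVec_le {s : Fin n → ℝ} (hs : ∀ i, |s i| ≤ 1)
    (x : Fin n → ℝ) : |x ⬝ᵥ diagonal s *ᵥ x| ≤ x ⬝ᵥ x := by
  refine (Finset.abs_sum_le_sum_abs _ _).trans (Finset.sum_le_sum fun i _ => ?_)
  calc |x i * (diagonal s *ᵥ x) i| = |s i| * (x i * x i) := by
        rw [mulVec_diagonal, mul_left_comm, abs_mul, abs_mul_self]
    _ ≤ 1 * (x i * x i) := by gcongr; exacts [mul_self_nonneg _, hs i]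
    _ = x i * x i := one_mul _

theorem sum_abs_diag_le_nuclearNorm {Z : Matrix (Fin n) (Fin n) ℝ} (hZ : Z.IsSymm) :
    ∑ i, |Z i i| ≤ nuclearNorm Z := by
  have hsign : ∀ i, |(SignType.sign (Z i i) : ℝ)| ≤ 1 := fun i => by
    rcases lt_trichotomy (Z i i) 0 with h | h | h <;> simp [h]
  simpa [matDot_diagonal] using
    (le_abs_self _).trans (abs_matDot_le_nuclearNorm hZ (abs_dotProduct_diagonal_mulVec_le hsign))

theorem abs_dotProduct_mulVec_le_of_isSymm {C : Matrix (Fin n) (Fin n) ℝ} (hC : C.IsSymm)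
    (y : Fin n → ℝ) : |y ⬝ᵥ C *ᵥ y| ≤ ∑ i, (∑ j, |C i j|) * y i ^ 2 := by
  have hamgm : ∀ i j, |y i * (C i j * y j)| ≤ (|C i j| * y i ^ 2 + |C i j| * y j ^ 2) / 2 :=
    fun i j => by
      rw [abs_mul, abs_mul, ← sq_abs (y i), ← sq_abs (y j)]
      nlinarith [two_mul_le_add_sq |y i| |y j|, abs_nonneg (C i j)]
  have hswap : ∑ i, ∑ j, |C i j| * y j ^ 2 = ∑ i, ∑ j, |C i j| * y i ^ 2 := by
    rw [Finset.sum_comm]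
    simp_rw [hC.apply]
  calc |y ⬝ᵥ C *ᵥ y| ≤ ∑ i, ∑ j, |y i * (C i j * y j)| := by
        simp only [dotProduct, mulVec, Finset.mul_sum]
        exact (Finset.abs_sum_le_sum_abs _ _).trans
          (Finset.sum_le_sum fun i _ => Finset.abs_sum_le_sum_abs _ _)
    _ ≤ ∑ i, ∑ j, (|C i j| * y i ^ 2 + |C i j| * y j ^ 2) / 2 :=
        Finset.sum_le_sum fun i _ => Finset.sum_le_sum fun j _ => hamgm i j
    _ = ∑ i, (∑ j, |C i j|) * y i ^ 2 := by
        simp only [← Finset.sum_div, Finset.sum_add_distrib, hswap, Finset.sum_mul]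
        ring

theorem abs_dotProduct_mulVec_diagonal_conj_le {C : Matrix (Fin n) (Fin n) ℝ} (hC : C.IsSymm)
    {ρ : Fin n → ℝ} (hρ : ∀ i, ∑ j, |C i j| ≤ ρ i) (hρpos : ∀ i, 0 < ρ i) (x : Fin n → ℝ) :
    |x ⬝ᵥ (diagonal (fun i => 1 / √(ρ i)) * C * diagonal (fun i => 1 / √(ρ i))) *ᵥ x|
      ≤ x ⬝ᵥ x := by
  set D := diagonal (fun i => 1 / √(ρ i))
  have hDx : x ᵥ* D = D *ᵥ x := by
    ext i; rw [vecMul_diagonal, mulVec_diagonal, mul_comm]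
  rw [← mulVec_mulVec, ← mulVec_mulVec, dotProduct_mulVec, hDx]
  refine (abs_dotProduct_mulVec_le_of_isSymm hC _).trans (Finset.sum_le_sum fun i _ => ?_)
  calc (∑ j, |C i j|) * (D *ᵥ x) i ^ 2 ≤ ρ i * (D *ᵥ x) i ^ 2 := by gcongr; exact hρ i
    _ = x i * x i := by
        rw [mulVec_diagonal, mul_pow, div_pow, Real.sq_sqrt (hρpos i).le]
        field_simp [(hρpos i).ne']

end

/-- The objective `f(X) = −Ĉ • X + Σᵢ (X_ii − ρ_i)⁺`, where
`Ĉ = diag(1/√ρ) C diag(1/√ρ)` and `ρ_i = Σ_j |C_ij| > 0`, is 2-Lipschitz with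
respect to the nuclear norm on symmetric matrices. -/
theorem stmt_11 {n : ℕ} (C : Matrix (Fin n) (Fin n) ℝ)
    (hC : C.IsSymm)
    (ρ : Fin n → ℝ) (hρ : ∀ i, ρ i = ∑ j, |C i j|) (hρpos : ∀ i, 0 < ρ i)
    (Chat : Matrix (Fin n) (Fin n) ℝ)
    (hChat : Chat = Matrix.diagonal (fun i => 1 / Real.sqrt (ρ i)) * C *
      Matrix.diagonal (fun i => 1 / Real.sqrt (ρ i)))
    (f : Matrix (Fin n) (Fin n) ℝ → ℝ)
    (hf : f = fun X => -matDot Chat X + ∑ i, max (X i i - ρ i) 0) :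
    ∀ X Y : Matrix (Fin n) (Fin n) ℝ, X.IsSymm → Y.IsSymm →
      |f X - f Y| ≤ 2 * nuclearNorm (X - Y) := by
  intro X Y hX hY
  have hZ : (X - Y).IsSymm := hX.sub hY
  have hlinear : |matDot Chat (X - Y)| ≤ nuclearNorm (X - Y) := by
    rw [hChat]
    exact abs_matDot_le_nuclearNorm hZ
      (abs_dotProduct_mulVec_diagonal_conj_le hC (fun i => (hρ i).ge) hρpos)
  have hpenalty :
      |∑ i, (max (X i i - ρ i) 0 - max (Y i i - ρ i) 0)| ≤ nuclearNorm (X - Y) := by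
    refine (Finset.abs_sum_le_sum_abs _ _).trans <| le_trans (Finset.sum_le_sum fun i _ => ?_)
      (sum_abs_diag_le_nuclearNorm hZ)
    simpa using abs_max_sub_max_le_abs (X i i - ρ i) (Y i i - ρ i) 0
  calc |f X - f Y|
      = |-matDot Chat (X - Y) + ∑ i, (max (X i i - ρ i) 0 - max (Y i i - ρ i) 0)| := by
        rw [hf, matDot_sub_right, Finset.sum_sub_distrib]; congr 1; ring
    _ ≤ |matDot Chat (X - Y)| + |∑ i, (max (X i i - ρ i) 0 - max (Y i i - ρ i) 0)| :=
        (abs_add_le _ _).trans_eq (by rw [abs_neg])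
    _ ≤ 2 * nuclearNorm (X - Y) := by linarith
end

section
/- Let K > 0 and let Ψ₁(Y) = Tr(exp Y) for Y symmetric n×n. Then on the domain {Y : Tr exp Y ≤ 2K}, Ψ₁ is 4K-smooth with respect to the operator norm: for any symmetric Y in the domain and any symmetric H, the second directional derivative satisfies D²Ψ₁(Y)[H, H] ≤ 4K ‖H‖_op². -/
open Matrix

attribute [local instance] Matrix.linftyOpNormedAddCommGroup Matrix.linftyOpNormedRing
  Matrix.linftyOpNormedAlgebra

/-- The ℓ²-operator norm (largest singular value) of a real square matrix. -/
noncomputable def opNorm {n : ℕ} (A : Matrix (Fin n) (Fin n) ℝ) : ℝ :=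
  ‖Matrix.toEuclideanCLM (𝕜 := ℝ) A‖

/-!
Differentiating the exponential series term by term, `t ↦ τ (exp (Y + t • H))` has second
derivative `τ (expDeriv Y H * H)` at `0` for every linear functional `τ` with
`τ (x * y) = τ (y * x)`, where `expDeriv Y H = ∑ₖ (1/k!) ∑_{i<k} Y^(k-1-i) H Y^i` is the
derivative of `exp` at `Y` in direction `H`. Diagonalising `Y = U diag(λ) Uᵀ` and writing
`B = Uᵀ H U`, the trace becomes `∑ᵢⱼ φ(λᵢ, λⱼ) Bᵢⱼ²`, where `φ(x, y) = (eˣ - eʸ) / (x - y)` is the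
divided difference of `exp`. The Hermite–Hadamard inequality `φ(x, y) ≤ (eˣ + eʸ) / 2` and the
symmetry of `B` bound this by `∑ⱼ e^λⱼ ∑ᵢ Bᵢⱼ²`, and each column of `B` has Euclidean norm at
most `‖H‖_op`, so the second derivative is at most `Tr (exp Y) ‖H‖_op² ≤ 2K ‖H‖_op²`.
-/

open Finset NormedSpace
open scoped Nat

section ExpDeriv

variable {𝔸 : Type*}

noncomputable def expDerivTerm [Ring 𝔸] [Algebra ℝ 𝔸] (a b : 𝔸) (k : ℕ) : 𝔸 :=
  (k ! : ℝ)⁻¹ • ∑ i ∈ range k, a ^ (k - 1 - i) * b * a ^ i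

noncomputable def expDeriv [Ring 𝔸] [Algebra ℝ 𝔸] [TopologicalSpace 𝔸] (a b : 𝔸) : 𝔸 :=
  ∑' k, expDerivTerm a b k

theorem summable_natCast_mul_pow_pred_div_factorial (R : ℝ) :
    Summable fun k : ℕ ↦ k * R ^ (k - 1) / k ! := by
  refine (summable_nat_add_iff 1).mp ((Real.summable_pow_div_factorial R).congr fun k ↦ ?_)
  rw [Nat.factorial_succ]
  push_cast
  field_simp

variable [NormedRing 𝔸] [NormOneClass 𝔸] [NormedAlgebra ℝ 𝔸]

theorem norm_expDerivTerm_le {a : 𝔸} {R : ℝ} (ha : ‖a‖ ≤ R) (b : 𝔸) (k : ℕ) :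
    ‖expDerivTerm a b k‖ ≤ ‖b‖ * (k * R ^ (k - 1) / k !) := by
  have hpow : ∀ m, ‖a ^ m‖ ≤ R ^ m := fun m ↦
    (norm_pow_le a m).trans (pow_le_pow_left₀ (norm_nonneg a) ha m)
  have hsummand : ∀ i ∈ range k, ‖a ^ (k - 1 - i) * b * a ^ i‖ ≤ ‖b‖ * R ^ (k - 1) := by
    intro i hi
    have hR : 0 ≤ R := (norm_nonneg a).trans ha
    calc ‖a ^ (k - 1 - i) * b * a ^ i‖ ≤ R ^ (k - 1 - i) * ‖b‖ * R ^ i :=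
          (norm_mul₃_le ..).trans (by gcongr <;> apply hpow)
      _ = ‖b‖ * R ^ (k - 1) := by
          rw [mul_comm _ ‖b‖, mul_assoc, ← pow_add, Nat.sub_add_cancel (by grind)]
  calc ‖expDerivTerm a b k‖ ≤ (k ! : ℝ)⁻¹ * ∑ i ∈ range k, ‖b‖ * R ^ (k - 1) := by
        rw [expDerivTerm, norm_smul, norm_inv, RCLike.norm_natCast]
        gcongr
        exact (norm_sum_le _ _).trans (sum_le_sum hsummand)
    _ = ‖b‖ * (k * R ^ (k - 1) / k !) := by
        rw [sum_const, card_range, nsmul_eq_mul]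
        ring

variable [CompleteSpace 𝔸]

theorem summable_expDerivTerm (a b : 𝔸) : Summable (expDerivTerm a b) :=
  .of_norm_bounded ((summable_natCast_mul_pow_pred_div_factorial ‖a‖).mul_left ‖b‖)
    (norm_expDerivTerm_le le_rfl b)

theorem hasDerivAt_exp_add_smul (a b : 𝔸) (t : ℝ) :
    HasDerivAt (fun s : ℝ ↦ exp (a + s • b)) (expDeriv (a + t • b) b) t := by
  set R := ‖a + t • b‖ + ‖b‖
  have hR : ∀ s ∈ Metric.ball t 1, ‖a + s • b‖ ≤ R := fun s hs ↦ by
    rw [show a + s • b = (a + t • b) + (s - t) • b by module]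
    refine (norm_add_le _ _).trans (add_le_add le_rfl ?_)
    rw [norm_smul]
    exact mul_le_of_le_one_left (norm_nonneg b) (mem_ball_iff_norm.mp hs).le
  simp_rw [exp_eq_tsum ℝ]
  refine hasDerivAt_tsum_of_isPreconnected
    ((summable_natCast_mul_pow_pred_div_factorial R).mul_left ‖b‖) Metric.isOpen_ball
    (convex_ball t 1).isPreconnected (fun k s _ ↦ ?_) (fun k s hs ↦ norm_expDerivTerm_le (hR s hs) b k)
    (Metric.mem_ball_self one_pos) (expSeries_summable' _) (Metric.mem_ball_self one_pos)
  exact (((((hasDerivAt_id' s).smul_const b).const_add a).fun_pow' k).const_smul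
    (k ! : ℝ)⁻¹).congr_deriv (by simp [expDerivTerm, Nat.pred_eq_sub_one])

theorem map_expDeriv {𝔹 : Type*} [NormedRing 𝔹] [NormedAlgebra ℝ 𝔹] {F : Type*} [FunLike F 𝔸 𝔹]
    [AlgHomClass F ℝ 𝔸 𝔹] (f : F) (hf : Continuous f) (a b : 𝔸) :
    f (expDeriv a b) = expDeriv (f a) (f b) := by
  let fL : 𝔸 →L[ℝ] 𝔹 := ⟨(AlgHomClass.toAlgHom f).toLinearMap, hf⟩
  have hfL : ∀ x, fL x = f x := fun _ ↦ rfl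
  simpa [hfL, expDeriv, expDerivTerm, map_sum] using fL.map_tsum (summable_expDerivTerm a b)

theorem apply_expDeriv_of_cyclic (τ : 𝔸 →L[ℝ] ℝ) (hτ : ∀ x y, τ (x * y) = τ (y * x)) (a b : 𝔸) :
    τ (expDeriv a b) = τ (exp a * b) := by
  have hterm : ∀ k, τ (expDerivTerm a b (k + 1)) = τ ((k ! : ℝ)⁻¹ • a ^ k * b) := fun k ↦ by
    have hcycle : ∀ i ∈ range (k + 1), τ (a ^ (k + 1 - 1 - i) * b * a ^ i) = τ (a ^ k * b) :=
      fun i hi ↦ by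
        rw [hτ, ← mul_assoc, ← pow_add, Nat.add_sub_cancel,
          Nat.add_sub_cancel' (Nat.le_of_lt_succ (mem_range.mp hi))]
    rw [expDerivTerm, map_smul, map_sum, sum_congr rfl hcycle, sum_const, card_range,
      smul_mul_assoc, map_smul, Nat.factorial_succ]
    simp only [smul_eq_mul, nsmul_eq_mul, Nat.cast_mul]
    field_simp
  have hsum : HasSum (fun k ↦ τ (expDerivTerm a b k)) (τ (exp a * b)) := by
    rw [← hasSum_nat_add_iff' 1]
    simp only [hterm]
    simp only [range_one, sum_singleton, expDerivTerm, range_zero, sum_empty, smul_zero, map_zero, sub_zero,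
      exp_eq_tsum ℝ]
    exact ((expSeries_summable' a).hasSum.mul_right b).mapL τ
  rw [expDeriv, τ.map_tsum (summable_expDerivTerm a b), hsum.tsum_eq]

theorem hasDerivAt_apply_exp_add_smul_of_cyclic (τ : 𝔸 →L[ℝ] ℝ)
    (hτ : ∀ x y, τ (x * y) = τ (y * x)) (a b : 𝔸) (t : ℝ) :
    HasDerivAt (fun s : ℝ ↦ τ (exp (a + s • b))) (τ (exp (a + t • b) * b)) t := by
  have := τ.hasFDerivAt.comp_hasDerivAt t (hasDerivAt_exp_add_smul a b t)
  rwa [apply_expDeriv_of_cyclic τ hτ] at this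

theorem iteratedDeriv_two_apply_exp_add_smul_of_cyclic (τ : 𝔸 →L[ℝ] ℝ)
    (hτ : ∀ x y, τ (x * y) = τ (y * x)) (a b : 𝔸) (t : ℝ) :
    iteratedDeriv 2 (fun s : ℝ ↦ τ (exp (a + s • b))) t = τ (expDeriv (a + t • b) b * b) := by
  have hderiv : deriv (fun s : ℝ ↦ τ (exp (a + s • b))) = fun s ↦ τ (exp (a + s • b) * b) :=
    funext fun s ↦ (hasDerivAt_apply_exp_add_smul_of_cyclic τ hτ a b s).deriv
  rw [iteratedDeriv_succ, iteratedDeriv_one, hderiv]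
  exact ((τ.comp ((ContinuousLinearMap.mul ℝ 𝔸).flip b)).hasFDerivAt.comp_hasDerivAt t
    (hasDerivAt_exp_add_smul a b t)).deriv

end ExpDeriv

section ExpDivDiff

noncomputable def expDivDiff (x y : ℝ) : ℝ :=
  ∑' k : ℕ, (k ! : ℝ)⁻¹ * ∑ i ∈ range k, x ^ (k - 1 - i) * y ^ i

theorem two_mul_exp_sub_exp_le {x y : ℝ} (h : y ≤ x) :
    2 * (Real.exp x - Real.exp y) ≤ (x - y) * (Real.exp x + Real.exp y) := by
  let g : ℝ → ℝ := fun z ↦ (z - y) * (Real.exp z + Real.exp y) - 2 * (Real.exp z - Real.exp y)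
  have hg : ∀ z, HasDerivAt g (Real.exp y - Real.exp z + (z - y) * Real.exp z) z := fun z ↦
    ((((hasDerivAt_id' z).sub_const y).fun_mul ((Real.hasDerivAt_exp z).add_const _)).fun_sub
      (((Real.hasDerivAt_exp z).sub_const _).const_mul 2)).congr_deriv (by ring)
  have hg_mono : Monotone g := by
    refine monotone_of_deriv_nonneg (fun z ↦ (hg z).differentiableAt) fun z ↦ ?_
    have hyz : Real.exp y = Real.exp (y - z) * Real.exp z := by rw [← Real.exp_add, sub_add_cancel]
    rw [(hg z).deriv, hyz]
    nlinarith [Real.add_one_le_exp (y - z), Real.exp_pos z]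
  simpa [g] using hg_mono h

theorem expDivDiff_mul_sub (x y : ℝ) : expDivDiff x y * (x - y) = Real.exp x - Real.exp y := by
  have hterm : ∀ k : ℕ, (k ! : ℝ)⁻¹ * (∑ i ∈ range k, x ^ (k - 1 - i) * y ^ i) * (x - y) =
      x ^ k / (k ! : ℝ) - y ^ k / (k ! : ℝ) := fun k ↦ by
    simp_rw [mul_comm (x ^ _), geom_sum₂_comm y x, mul_assoc, geom_sum₂_mul]
    ring
  rw [expDivDiff, ← tsum_mul_right, tsum_congr hterm,
    (Real.summable_pow_div_factorial x).tsum_sub (Real.summable_pow_div_factorial y),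
    Real.exp_eq_exp_ℝ, exp_eq_tsum_div]

-- Both sides are the derivative of `exp` at `x`, the left one computed in the algebra `ℝ`.
theorem expDivDiff_self (x : ℝ) : expDivDiff x x = Real.exp x := by
  have h := hasDerivAt_exp_add_smul x (1 : ℝ) 0
  simp only [smul_eq_mul, mul_one, add_zero, ← Real.exp_eq_exp_ℝ] at h
  have h' : HasDerivAt (fun s ↦ Real.exp (x + s)) (Real.exp x) 0 := by
    simpa using (Real.hasDerivAt_exp (x + 0)).comp_const_add x 0
  rw [← h.unique h']
  simp [expDeriv, expDerivTerm, expDivDiff]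

theorem expDivDiff_le (x y : ℝ) : expDivDiff x y ≤ (Real.exp x + Real.exp y) / 2 := by
  have h := expDivDiff_mul_sub x y
  rcases lt_trichotomy x y with hxy | rfl | hxy
  · nlinarith [two_mul_exp_sub_exp_le hxy.le]
  · rw [expDivDiff_self]; linarith
  · nlinarith [two_mul_exp_sub_exp_le hxy.le]

theorem sum_expDivDiff_mul_le {ι : Type*} [Fintype ι] (d : ι → ℝ) {B : Matrix ι ι ℝ}
    (hB : B.IsSymm) :
    ∑ i, ∑ j, expDivDiff (d i) (d j) * (B i j * B j i) ≤
      ∑ j, Real.exp (d j) * ∑ i, B i j ^ 2 := by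
  have hswap : ∑ i, ∑ j, Real.exp (d i) * B i j ^ 2 = ∑ i, ∑ j, Real.exp (d j) * B i j ^ 2 := by
    rw [sum_comm]
    exact sum_congr rfl fun i _ ↦ sum_congr rfl fun j _ ↦ by rw [hB.apply]
  calc ∑ i, ∑ j, expDivDiff (d i) (d j) * (B i j * B j i)
      ≤ ∑ i, ∑ j, (Real.exp (d i) + Real.exp (d j)) / 2 * B i j ^ 2 :=
        sum_le_sum fun i _ ↦ sum_le_sum fun j _ ↦ by
          rw [hB.apply, ← sq]
          exact mul_le_mul_of_nonneg_right (expDivDiff_le _ _) (sq_nonneg _)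
    _ = (∑ i, ∑ j, Real.exp (d i) * B i j ^ 2 + ∑ i, ∑ j, Real.exp (d j) * B i j ^ 2) / 2 := by
        simp only [← sum_add_distrib, sum_div]
        exact sum_congr rfl fun i _ ↦ sum_congr rfl fun j _ ↦ by ring
    _ = ∑ j, Real.exp (d j) * ∑ i, B i j ^ 2 := by
        rw [hswap, add_self_div_two, sum_comm]
        simp_rw [mul_sum]

end ExpDivDiff

namespace Matrix

variable {ι : Type*} [Fintype ι] [DecidableEq ι]

theorem iteratedDeriv_two_trace_exp_add_smul (Y H : Matrix ι ι ℝ) :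
    iteratedDeriv 2 (fun t : ℝ ↦ (exp (Y + t • H)).trace) 0 = (expDeriv Y H * H).trace := by
  cases isEmpty_or_nonempty ι
  · simp [trace]
  · have h := iteratedDeriv_two_apply_exp_add_smul_of_cyclic
      (traceLinearMap ι ℝ ℝ).toContinuousLinearMap trace_mul_comm Y H 0
    rwa [zero_smul, add_zero] at h

theorem expDeriv_diagonal_apply (d : ι → ℝ) (B : Matrix ι ι ℝ) (i j : ι) :
    expDeriv (diagonal d) B i j = B i j * expDivDiff (d i) (d j) := by
  have : Nonempty ι := ⟨i⟩
  have hs := Pi.hasSum.mp (Pi.hasSum.mp (summable_expDerivTerm (diagonal d) B).hasSum i) j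
  refine hs.tsum_eq.symm.trans ?_
  rw [expDivDiff, ← tsum_mul_left]
  refine tsum_congr fun k ↦ ?_
  simp only [expDerivTerm, diagonal_pow, smul_apply, sum_apply, diagonal_mul, mul_diagonal,
    Pi.pow_apply, smul_eq_mul, mul_sum]
  exact sum_congr rfl fun l _ ↦ by ring

theorem trace_expDeriv_diagonal_mul (d : ι → ℝ) (B : Matrix ι ι ℝ) :
    (expDeriv (diagonal d) B * B).trace = ∑ i, ∑ j, expDivDiff (d i) (d j) * (B i j * B j i) := by
  simp only [trace, diag, mul_apply, expDeriv_diagonal_apply]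
  exact sum_congr rfl fun i _ ↦ sum_congr rfl fun j _ ↦ by ring

theorem trace_conjStarAlgAut (U : unitary (Matrix ι ι ℝ)) (A : Matrix ι ι ℝ) :
    (Unitary.conjStarAlgAut ℝ _ U A).trace = A.trace := by
  rw [Unitary.conjStarAlgAut_apply, trace_mul_cycle, Unitary.coe_star_mul_self, one_mul]

theorem continuous_conjStarAlgAut (U : unitary (Matrix ι ι ℝ)) :
    Continuous (Unitary.conjStarAlgAut ℝ (Matrix ι ι ℝ) U) :=
  (continuous_const_mul _).mul continuous_const

theorem trace_expDeriv_conjStarAlgAut_mul (U : unitary (Matrix ι ι ℝ)) (A B : Matrix ι ι ℝ) :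
    (expDeriv (Unitary.conjStarAlgAut ℝ _ U A) (Unitary.conjStarAlgAut ℝ _ U B) *
      Unitary.conjStarAlgAut ℝ _ U B).trace = (expDeriv A B * B).trace := by
  set c := Unitary.conjStarAlgAut ℝ _ U
  cases isEmpty_or_nonempty ι
  · simp [trace]
  · calc (expDeriv (c A) (c B) * c B).trace = (c (expDeriv A B * B)).trace := by
          rw [map_mul]
          exact congrArg (trace <| · * c B)
            (map_expDeriv c (continuous_conjStarAlgAut U) A B).symm
      _ = (expDeriv A B * B).trace := trace_conjStarAlgAut U _

theorem trace_exp_conjStarAlgAut (U : unitary (Matrix ι ι ℝ)) (A : Matrix ι ι ℝ) :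
    (exp (Unitary.conjStarAlgAut ℝ _ U A)).trace = (exp A).trace :=
  (congrArg trace (map_exp _ (continuous_conjStarAlgAut U) A).symm).trans
    (trace_conjStarAlgAut U _)

theorem IsHermitian.trace_exp_eq_sum {Y : Matrix ι ι ℝ} (hY : Y.IsHermitian) :
    (NormedSpace.exp Y).trace = ∑ i, Real.exp (hY.eigenvalues i) := by
  conv_lhs => rw [hY.spectral_theorem]
  rw [trace_exp_conjStarAlgAut, exp_diagonal, trace_diagonal]
  simp [Real.exp_eq_exp_ℝ]

theorem IsHermitian.sum_sq_conj_eigenvectorUnitary_apply_le {Y : Matrix ι ι ℝ}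
    (hY : Y.IsHermitian) (H : Matrix ι ι ℝ) (j : ι) :
    ∑ i, (Unitary.conjStarAlgAut ℝ _ hY.eigenvectorUnitary).symm H i j ^ 2 ≤
      ‖toEuclideanCLM (𝕜 := ℝ) H‖ ^ 2 := by
  set b := hY.eigenvectorBasis
  have hentry : ∀ i, (Unitary.conjStarAlgAut ℝ _ hY.eigenvectorUnitary).symm H i j =
      inner ℝ (b i) (toEuclideanCLM (𝕜 := ℝ) H (b j)) := fun i ↦ by
    simp only [Unitary.conjStarAlgAut_symm_apply, mul_apply, star_apply,
      eigenvectorUnitary_apply, star_trivial, EuclideanSpace.inner_eq_star_dotProduct, dotProduct,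
      ofLp_toEuclideanCLM, mulVec, Pi.star_apply, sum_mul, b]
    rw [sum_comm]
    exact sum_congr rfl fun _ _ ↦ sum_congr rfl fun _ _ ↦ by ring
  simp_rw [hentry, b.sum_sq_inner_right]
  calc ‖toEuclideanCLM (𝕜 := ℝ) H (b j)‖ ^ 2 ≤ (‖toEuclideanCLM (𝕜 := ℝ) H‖ * ‖b j‖) ^ 2 := by
        gcongr; exact ContinuousLinearMap.le_opNorm _ _
    _ = _ := by rw [b.orthonormal.1 j, mul_one]

end Matrix

/-- Let `K > 0` and `Ψ₁(Y) = Tr exp(Y)`. On the domain `{Y : Tr exp Y ≤ 2K}`, `Ψ₁`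
is `4K`-smooth with respect to the operator norm: for symmetric `Y` in the domain
and symmetric `H`, the second directional derivative of `Ψ₁` at `Y` along `H`,
i.e. `d²/dt² Tr exp(Y + tH)` at `t = 0`, is at most `4K ‖H‖_op²`. -/
theorem stmt_13 {n : ℕ} (K : ℝ) (hK : 0 < K)
    (Y H : Matrix (Fin n) (Fin n) ℝ) (hY : Y.IsSymm) (hH : H.IsSymm)
    (hdom : (NormedSpace.exp Y).trace ≤ 2 * K) :
    iteratedDeriv 2 (fun t : ℝ => (NormedSpace.exp (Y + t • H)).trace) 0 ≤
      4 * K * opNorm H ^ 2 := by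
  have hYh : Y.IsHermitian := isHermitian_iff_isSymm.mpr hY
  set c := Unitary.conjStarAlgAut ℝ (Matrix (Fin n) (Fin n) ℝ) hYh.eigenvectorUnitary
  set ev := hYh.eigenvalues
  set B := c.symm H
  have hYc : Y = c (diagonal ev) := by
    simpa only [RCLike.ofReal_real_eq_id, Function.id_comp] using hYh.spectral_theorem
  have hHc : H = c B := (c.apply_symm_apply H).symm
  have hB : B.IsSymm := isHermitian_iff_isSymm.mp
    ((isHermitian_iff_isSymm.mpr hH).isSelfAdjoint.map c.symm)
  calc iteratedDeriv 2 (fun t : ℝ => (NormedSpace.exp (Y + t • H)).trace) 0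
      = (expDeriv Y H * H).trace := iteratedDeriv_two_trace_exp_add_smul Y H
    _ = ∑ i, ∑ j, expDivDiff (ev i) (ev j) * (B i j * B j i) := by
        rw [hYc, hHc, trace_expDeriv_conjStarAlgAut_mul, trace_expDeriv_diagonal_mul]
    _ ≤ ∑ j, Real.exp (ev j) * ∑ i, B i j ^ 2 := sum_expDivDiff_mul_le ev hB
    _ ≤ ∑ j, Real.exp (ev j) * opNorm H ^ 2 := by
        gcongr with j
        exact hYh.sum_sq_conj_eigenvectorUnitary_apply_le H j
    _ = (NormedSpace.exp Y).trace * opNorm H ^ 2 := by rw [hYh.trace_exp_eq_sum, sum_mul]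
    _ ≤ 4 * K * opNorm H ^ 2 := by gcongr; linarith
end

section
/- Let Z₁, Z₂, Z, Δ be real symmetric n×n matrices and ζ ~ N(0, I_n). Define the random variable θ̂_i = (Z₁ Δ Z₂ ζ)_i (Z ζ)_i for each coordinate i. Then E[θ̂_i] = (Z₁ Δ Z₂ Z)_ii, and E[θ̂_i²] ≤ 3 (Z₁ Δ Z₂² Δ Z₁)_ii (Z²)_ii. -/
/-!
Writing `a` and `b` for the `i`-th rows of `Z₁ Δ Z₂` and `Z`, the estimator is
`θ̂ᵢ = ⟪a, ζ⟫ ⟪b, ζ⟫`, and a linear form `⟪a, ζ⟫` of a standard Gaussian vector is `N(0, ‖a‖²)`.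
The mean of `θ̂ᵢ` is the covariance `⟪a, b⟫` of the standard Gaussian measure. For the second
moment, Cauchy–Schwarz bounds `E[⟪a, ζ⟫² ⟪b, ζ⟫²]` by `√(E⟪a, ζ⟫⁴ · E⟪b, ζ⟫⁴) = 3 ‖a‖² ‖b‖²`,
using the Gaussian fourth moment `3σ⁴`. By symmetry of the matrices, `⟪a, b⟫`, `‖a‖²` and
`‖b‖²` are the diagonal entries in the statement.
-/

open Matrix MeasureTheory ProbabilityTheory

open scoped NNReal RealInnerProductSpace

lemma hasDerivAt_mul_exp_sq (c : ℝ) {p : ℝ → ℝ} {p' t : ℝ} (hp : HasDerivAt p p' t) :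
    HasDerivAt (fun t ↦ p t * Real.exp (c * t ^ 2 / 2))
      ((p' + c * t * p t) * Real.exp (c * t ^ 2 / 2)) t :=
  (hp.fun_mul (((hasDerivAt_pow 2 t).const_mul c).div_const 2).exp).congr_deriv (by ring)

lemma deriv_mul_exp_sq (c : ℝ) {p q : ℝ → ℝ} (hp : ∀ t, HasDerivAt p (q t - c * t * p t) t) :
    deriv (fun t ↦ p t * Real.exp (c * t ^ 2 / 2)) = fun t ↦ q t * Real.exp (c * t ^ 2 / 2) :=
  funext fun t ↦ by simpa using (hasDerivAt_mul_exp_sq c (hp t)).deriv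

/- The fourth derivative at `0` of the moment generating function `exp (v t² / 2)`; each
derivative is a polynomial times the same exponential. -/
lemma integral_pow_four_gaussianReal (v : ℝ≥0) :
    ∫ x, x ^ 4 ∂gaussianReal 0 v = 3 * (v : ℝ) ^ 2 := by
  set c : ℝ := (v : ℝ)
  have h := iteratedDeriv_mgf_zero (X := fun x ↦ x) (μ := gaussianReal 0 v) (by simp) 4
  simp only [mgf_fun_id_gaussianReal, zero_mul, zero_add, Pi.pow_apply] at h
  rw [← h, iteratedDeriv_succ, iteratedDeriv_succ, iteratedDeriv_succ, iteratedDeriv_one,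
    show (fun t : ℝ ↦ Real.exp (c * t ^ 2 / 2)) = fun t ↦ 1 * Real.exp (c * t ^ 2 / 2) by simp,
    deriv_mul_exp_sq c (q := fun t ↦ c * t) fun t ↦
      (hasDerivAt_const t (1 : ℝ)).congr_deriv (by ring),
    deriv_mul_exp_sq c (q := fun t ↦ c + c ^ 2 * t ^ 2) fun t ↦
      ((hasDerivAt_id' t).const_mul c).congr_deriv (by ring),
    deriv_mul_exp_sq c (q := fun t ↦ 3 * c ^ 2 * t + c ^ 3 * t ^ 3) fun t ↦
      (((hasDerivAt_pow 2 t).const_mul (c ^ 2)).const_add c).congr_deriv (by push_cast; ring),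
    deriv_mul_exp_sq c (q := fun t ↦ 3 * c ^ 2 + 6 * c ^ 3 * t ^ 2 + c ^ 4 * t ^ 4) fun t ↦
      (((hasDerivAt_id' t).const_mul (3 * c ^ 2)).fun_add
        ((hasDerivAt_pow 3 t).const_mul (c ^ 3))).congr_deriv (by push_cast; ring)]
  simp

section stdGaussian

variable {E : Type*} [NormedAddCommGroup E] [InnerProductSpace ℝ E] [FiniteDimensional ℝ E]
  [MeasurableSpace E] [BorelSpace E]

lemma stdGaussian_map_inner (a : E) :
    (stdGaussian E).map (fun x ↦ ⟪a, x⟫) = gaussianReal 0 (‖a‖₊ ^ 2) := by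
  have h := IsGaussian.map_eq_gaussianReal (μ := stdGaussian E) (innerSL ℝ a)
  rw [integral_strongDual_stdGaussian, variance_dual_stdGaussian, innerSL_apply_norm] at h
  convert h using 2
  · ext; simp
  · ext; simp

lemma integral_inner_pow_four_stdGaussian (a : E) :
    ∫ x, ⟪a, x⟫ ^ 4 ∂stdGaussian E = 3 * ‖a‖ ^ 4 := calc
  ∫ x, ⟪a, x⟫ ^ 4 ∂stdGaussian E = ∫ y, y ^ 4 ∂(stdGaussian E).map (fun x ↦ ⟪a, x⟫) :=
    (integral_map (φ := fun x ↦ ⟪a, x⟫) (f := fun y ↦ y ^ 4) (by fun_prop) (by fun_prop)).symm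
  _ = 3 * ‖a‖ ^ 4 := by
    rw [stdGaussian_map_inner, integral_pow_four_gaussianReal]
    push_cast
    ring

lemma integral_inner_mul_inner_stdGaussian (a b : E) :
    ∫ x, ⟪a, x⟫ * ⟪b, x⟫ ∂stdGaussian E = ⟪a, b⟫ := by
  have h := covarianceBilin_apply IsGaussian.memLp_two_id a b (μ := stdGaussian E)
  simp only [covarianceBilin_stdGaussian, id, integral_id_stdGaussian, sub_zero] at h
  exact h.symm

lemma integral_sq_inner_mul_sq_inner_stdGaussian_le (a b : E) :
    ∫ x, (⟪a, x⟫ * ⟪b, x⟫) ^ 2 ∂stdGaussian E ≤ 3 * ‖a‖ ^ 2 * ‖b‖ ^ 2 := by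
  have memLp_sq (c : E) : MemLp (fun x ↦ ⟪c, x⟫ ^ 2) (ENNReal.ofReal 2) (stdGaussian E) := by
    rw [ENNReal.ofReal_ofNat, memLp_two_iff_integrable_sq (by fun_prop)]
    simpa [← pow_mul, Even.pow_abs ⟨2, rfl⟩] using
      (IsGaussian.memLp_dual (stdGaussian E) (innerSL ℝ c) 4 (by simp)).integrable_norm_pow
        (by norm_num)
  have h := integral_mul_le_Lp_mul_Lq_of_nonneg Real.HolderConjugate.two_two
    (Filter.Eventually.of_forall fun x ↦ sq_nonneg ⟪a, x⟫)
    (Filter.Eventually.of_forall fun x ↦ sq_nonneg ⟪b, x⟫) (memLp_sq a) (memLp_sq b)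
  simp only [Real.rpow_two, ← pow_mul, integral_inner_pow_four_stdGaussian,
    ← Real.sqrt_eq_rpow, ← mul_pow] at h
  rwa [← Real.sqrt_mul (by positivity),
    show 3 * ‖a‖ ^ 4 * (3 * ‖b‖ ^ 4) = (3 * ‖a‖ ^ 2 * ‖b‖ ^ 2) ^ 2 by ring,
    Real.sqrt_sq (by positivity)] at h

end stdGaussian

lemma integral_pi_gaussianReal_comp_toLp {ι G : Type*} [Fintype ι] [NormedAddCommGroup G]
    [NormedSpace ℝ G] (f : EuclideanSpace ℝ ι → G) :
    ∫ ζ, f (WithLp.toLp 2 ζ) ∂Measure.pi (fun _ : ι ↦ gaussianReal 0 1) =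
      ∫ x, f x ∂stdGaussian (EuclideanSpace ℝ ι) := by
  rw [← map_pi_eq_stdGaussian, ← MeasurableEquiv.coe_toLp, integral_map_equiv]

namespace Matrix

variable {m n : Type*} [Fintype n]

lemma mulVec_apply_eq_inner (M : Matrix m n ℝ) (v : n → ℝ) (i : m) :
    (M *ᵥ v) i = ⟪WithLp.toLp 2 (M i), WithLp.toLp 2 v⟫ := by
  simp [mulVec, dotProduct, PiLp.inner_apply, mul_comm]

lemma mul_transpose_apply_eq_inner (A B : Matrix m n ℝ) (i j : m) :
    (A * Bᵀ) i j = ⟪WithLp.toLp 2 (A i), WithLp.toLp 2 (B j)⟫ := by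
  simp [mul_apply, PiLp.inner_apply, mul_comm]

end Matrix

/-- For symmetric matrices `Z₁, Z₂, Z, Δ` and a standard Gaussian vector `ζ`, the
estimator `θ̂ᵢ = (Z₁ Δ Z₂ ζ)ᵢ (Z ζ)ᵢ` satisfies `E[θ̂ᵢ] = (Z₁ Δ Z₂ Z)ᵢᵢ` and
`E[θ̂ᵢ²] ≤ 3 (Z₁ Δ Z₂² Δ Z₁)ᵢᵢ (Z²)ᵢᵢ`. -/
theorem stmt_18 {n : ℕ} (Z₁ Z₂ Z Δ : Matrix (Fin n) (Fin n) ℝ)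
    (hZ₁ : Z₁.IsSymm) (hZ₂ : Z₂.IsSymm) (hZ : Z.IsSymm) (hΔ : Δ.IsSymm) (i : Fin n) :
    (∫ ζ : Fin n → ℝ, ((Z₁ * Δ * Z₂).mulVec ζ i) * (Z.mulVec ζ i)
        ∂(Measure.pi fun _ : Fin n => gaussianReal 0 1)) = (Z₁ * Δ * Z₂ * Z) i i ∧
    (∫ ζ : Fin n → ℝ, (((Z₁ * Δ * Z₂).mulVec ζ i) * (Z.mulVec ζ i)) ^ 2
        ∂(Measure.pi fun _ : Fin n => gaussianReal 0 1)) ≤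
      3 * (Z₁ * Δ * (Z₂ * Z₂) * Δ * Z₁) i i * (Z * Z) i i := by
  set A := Z₁ * Δ * Z₂
  have hAAt : Z₁ * Δ * (Z₂ * Z₂) * Δ * Z₁ = A * Aᵀ := by
    simp only [A, transpose_mul, hZ₁.eq, hZ₂.eq, hΔ.eq]
    noncomm_ring
  simp only [mulVec_apply_eq_inner]
  rw [integral_pi_gaussianReal_comp_toLp (fun x ↦ ⟪_, x⟫ * ⟪_, x⟫),
    integral_pi_gaussianReal_comp_toLp (fun x ↦ (⟪_, x⟫ * ⟪_, x⟫) ^ 2)]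
  refine ⟨?_, ?_⟩
  · rw [integral_inner_mul_inner_stdGaussian, ← mul_transpose_apply_eq_inner, hZ.eq]
  · rw [hAAt, show Z * Z = Z * Zᵀ by rw [hZ.eq], mul_transpose_apply_eq_inner,
      mul_transpose_apply_eq_inner, real_inner_self_eq_norm_sq, real_inner_self_eq_norm_sq]
    exact integral_sq_inner_mul_sq_inner_stdGaussian_le _ _
end
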